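/- arXiv:2011.06135 — 3 statements merged into one kernel-verified Lean document; each statement's English description precedes it below -/
import Mathlib

section
/- Let b_1,…,b_n ∈ ℝ^d be linearly independent, n even, and let 1 ≤ p ≤ ∞, r > 0, γ > 1. With A_0, A_1, B_0, B_1 as in the split-basis construction: (1) if some vector v ∈ (A_0 − B_1) ∪ (A_1 − B_0) satisfies ‖v‖_p ≤ r, then there is a nonzero α ∈ {0,1}^n with ‖∑ α_i b_i‖_p ≤ r; (2) if every v ∈ (A_0 − B_1) ∪ (A_1 − B_0) satisfies ‖v‖_p ≥ γr, then every nonzero α ∈ {0,1}^n satisfies ‖∑ α_i b_i‖_p ≥ γr. -/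
open Pointwise

theorem stmt_5 (m d : ℕ) (p : ENNReal) (hp : 1 ≤ p)
    (b : Fin m ⊕ Fin m → PiLp p (fun _ : Fin d => ℝ))
    (hb : LinearIndependent ℝ b) (r γ : ℝ) (hr : 0 < r) (hγ : 1 < γ) :
    let A0 : Set (PiLp p (fun _ : Fin d => ℝ)) :=
      {v | ∃ α : Fin m → Bool, v = ∑ i, (if α i then (1:ℝ) else 0) • b (Sum.inl i)}
    let A1 : Set (PiLp p (fun _ : Fin d => ℝ)) :=
      {v | ∃ α : Fin m → Bool, α ≠ (fun _ => false) ∧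
        v = ∑ i, (if α i then (1:ℝ) else 0) • b (Sum.inl i)}
    let B0 : Set (PiLp p (fun _ : Fin d => ℝ)) :=
      {v | ∃ α : Fin m → Bool, v = -∑ i, (if α i then (1:ℝ) else 0) • b (Sum.inr i)}
    let B1 : Set (PiLp p (fun _ : Fin d => ℝ)) :=
      {v | ∃ α : Fin m → Bool, α ≠ (fun _ => false) ∧
        v = -∑ i, (if α i then (1:ℝ) else 0) • b (Sum.inr i)}
    ((∃ v ∈ (A0 - B1) ∪ (A1 - B0), ‖v‖ ≤ r) →
      ∃ α : Fin m ⊕ Fin m → Bool, α ≠ (fun _ => false) ∧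
        ‖∑ i, (if α i then (1:ℝ) else 0) • b i‖ ≤ r) ∧
    ((∀ v ∈ (A0 - B1) ∪ (A1 - B0), γ * r ≤ ‖v‖) →
      ∀ α : Fin m ⊕ Fin m → Bool, α ≠ (fun _ => false) →
        γ * r ≤ ‖∑ i, (if α i then (1:ℝ) else 0) • b i‖) := by
  intro A0 A1 B0 B1
  have key : ∀ α : Fin m → Bool, ∀ β : Fin m → Bool,
      (∑ i : Fin m ⊕ Fin m, (if Sum.elim α β i then (1:ℝ) else 0) • b i) =
      (∑ i, (if α i then (1:ℝ) else 0) • b (Sum.inl i)) -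
      (-∑ i, (if β i then (1:ℝ) else 0) • b (Sum.inr i)) := by
    intro α β
    rw [Fintype.sum_sum_type]
    simp only [Sum.elim_inl, Sum.elim_inr]
    abel
  constructor
  · rintro ⟨v, hv, hvr⟩
    rcases hv with h | h
    · obtain ⟨x, hx, y, hy, hxy⟩ := Set.mem_sub.mp h
      obtain ⟨α, hαx⟩ := hx
      obtain ⟨β, hβne, hβy⟩ := hy
      refine ⟨Sum.elim α β, ?_, ?_⟩
      · intro hc
        apply hβne
        funext i
        have := congrFun hc (Sum.inr i)
        simpa using this
      · rw [key α β, ← hαx, ← hβy, hxy]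
        exact hvr
    · obtain ⟨x, hx, y, hy, hxy⟩ := Set.mem_sub.mp h
      obtain ⟨α, hαne, hαx⟩ := hx
      obtain ⟨β, hβy⟩ := hy
      refine ⟨Sum.elim α β, ?_, ?_⟩
      · intro hc
        apply hαne
        funext i
        have := congrFun hc (Sum.inl i)
        simpa using this
      · rw [key α β, ← hαx, ← hβy, hxy]
        exact hvr
  · intro hall α' hα'
    set α : Fin m → Bool := fun i => α' (Sum.inl i) with hα
    set β : Fin m → Bool := fun i => α' (Sum.inr i) with hβ
    have helim : Sum.elim α β = α' := by
      funext i; cases i <;> rfl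
    have hsum : (∑ i, (if α' i then (1:ℝ) else 0) • b i) =
        (∑ i, (if α i then (1:ℝ) else 0) • b (Sum.inl i)) -
        (-∑ i, (if β i then (1:ℝ) else 0) • b (Sum.inr i)) := by
      rw [← helim, key α β]
    rw [hsum]
    by_cases hβne : β = (fun _ => false)
    · have hαne : α ≠ (fun _ => false) := by
        intro hc
        apply hα'
        funext i
        cases i with
        | inl i => exact congrFun hc i
        | inr i => exact congrFun hβne i
      apply hall
      right
      exact Set.mem_sub.mpr ⟨_, ⟨α, hαne, rfl⟩, _, ⟨β, rfl⟩, rfl⟩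
    · apply hall
      left
      exact Set.mem_sub.mpr ⟨_, ⟨α, rfl⟩, _, ⟨β, hβne, rfl⟩, rfl⟩
end

section
/- Let (M, D) be a metric space, d ≥ 1, and F, G : {0,1}^d → M maps such that for all S, T ∈ {0,1}^d: if S and T are disjoint as supports (no coordinate where both are 1) then D(F(S), G(T)) ≤ r, and otherwise D(F(S), G(T)) ≥ γr, where r > 0. Then γ ≤ 3. -/
theorem stmt_6 {M : Type*} [MetricSpace M] (d : ℕ) (hd : 1 ≤ d)
    (F G : (Fin d → Bool) → M) (r γ : ℝ) (hr : 0 < r)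
    (hclose : ∀ S T : Fin d → Bool, (¬ ∃ j, S j = true ∧ T j = true) →
      dist (F S) (G T) ≤ r)
    (hfar : ∀ S T : Fin d → Bool, (∃ j, S j = true ∧ T j = true) →
      γ * r ≤ dist (F S) (G T)) :
    γ ≤ 3 := by
  have h1 : γ * r ≤ dist (F (fun _ => true)) (G (fun _ => true)) :=
    hfar _ _ ⟨⟨0, hd⟩, rfl, rfl⟩
  have h2 : dist (F (fun _ => true)) (G (fun _ => true)) ≤ 3 * r := by
    calc dist (F (fun _ => true)) (G (fun _ => true))
        ≤ dist (F (fun _ => true)) (G (fun _ => false)) +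
          dist (G (fun _ => false)) (F (fun _ => false)) +
          dist (F (fun _ => false)) (G (fun _ => true)) := dist_triangle4 _ _ _ _
      _ ≤ r + r + r := by
          have a := hclose (fun _ => true) (fun _ => false) (by simp)
          have b := hclose (fun _ => false) (fun _ => false) (by simp)
          have c := hclose (fun _ => false) (fun _ => true) (by simp)
          rw [dist_comm (G (fun _ => false))]
          linarith
      _ = 3 * r := by ring
  have := h1.trans h2
  nlinarith
end

section
/- Suppose F, G : {0,1}^d → M into a metric space (M, D) satisfy: D(F(S), G(T)) ≤ r whenever S and T have disjoint supports. Then for any S, T ∈ {0,1}^d whose supports intersect in exactly one coordinate, D(F(S), G(T)) ≤ 3r. -/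
theorem stmt_12 {M : Type*} [MetricSpace M] (d : ℕ)
    (F G : (Fin d → Bool) → M) (r : ℝ)
    (hclose : ∀ S T : Fin d → Bool, (¬ ∃ j, S j = true ∧ T j = true) →
      dist (F S) (G T) ≤ r) :
    ∀ S T : Fin d → Bool, (∃! j : Fin d, S j = true ∧ T j = true) →
      dist (F S) (G T) ≤ 3 * r := by
  intro S T h
  obtain ⟨j, ⟨hSj, hTj⟩, huniq⟩ := h
  set S' : Fin d → Bool := Function.update S j false with hS'
  set T' : Fin d → Bool := Function.update T j false with hT'
  have h1 : dist (F S) (G T') ≤ r := by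
    apply hclose
    rintro ⟨k, hSk, hTk⟩
    by_cases hk : k = j
    · subst hk; simp [hT'] at hTk
    · exact hk (huniq k ⟨hSk, by simpa [hT', Function.update_of_ne hk] using hTk⟩)
  have h2 : dist (F S') (G T') ≤ r := by
    apply hclose
    rintro ⟨k, hSk, hTk⟩
    by_cases hk : k = j
    · subst hk; simp [hS'] at hSk
    · exact hk (huniq k ⟨by simpa [hS', Function.update_of_ne hk] using hSk,
        by simpa [hT', Function.update_of_ne hk] using hTk⟩)
  have h3 : dist (F S') (G T) ≤ r := by
    apply hclose
    rintro ⟨k, hSk, hTk⟩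
    by_cases hk : k = j
    · subst hk; simp [hS'] at hSk
    · exact hk (huniq k ⟨by simpa [hS', Function.update_of_ne hk] using hSk, hTk⟩)
  calc dist (F S) (G T) ≤ dist (F S) (G T') + dist (G T') (F S') + dist (F S') (G T) :=
        dist_triangle4 _ _ _ _
    _ ≤ r + r + r := by
        have := dist_comm (G T') (F S')
        linarith [h1, h2, h3, this ▸ h2]
    _ = 3 * r := by ring
end
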